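/- Let G be a triangle-free simple graph with n vertices and m ≥ 1 edges. For any edge uv ∈ E(G) with endpoint degrees d_u and d_v, the Ky Fan 2-norm of the LI-matrix satisfies ||LI(G)||_{F_2} ≥ √(Υ + 2√Ψ), where Υ = (d_u − 2m/n)² + (d_v − 2m/n)² + d_u + d_v and Ψ = ((d_u − 2m/n)² + d_u)·((d_v − 2m/n)² + d_v) − (d_u + d_v − 4m/n)². -/

import Mathlib

/-!
Write `t = 2m/n` and `M = L(G) - t·I`. Since `G` has no triangle, the endpoints of the edge `uv`
have no common neighbour, so the compression of `M²` to the plane spanned by `e_u, e_v` is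
`[[(d_u - t)² + d_u, 2t - d_u - d_v], [2t - d_u - d_v, (d_v - t)² + d_v]]`, whose trace is `Υ`
and whose determinant is `Ψ`. By Cauchy interlacing its eigenvalues `α ≥ β` are dominated by two
distinct eigenvalues `(μ_i - t)², (μ_j - t)²` of `M²`, so
`‖LI(G)‖_{F_2} ≥ |μ_i - t| + |μ_j - t| ≥ √α + √β ≥ √(Υ + 2√Ψ)`.
-/

open Finset SimpleGraph

attribute [local instance] Classical.propDecidable

/-- The `i`-th largest value of the tuple `f` (values sorted in non-increasing order). -/
noncomputable def sortDesc {n : ℕ} (f : Fin n → ℝ) : Fin n → ℝ :=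
  fun i => f (Tuple.sort f i.rev)

/-- The Laplacian eigenvalues of `G`, in non-increasing order:
`lapEig G 0 = μ₁ ≥ lapEig G 1 = μ₂ ≥ ⋯`. -/
noncomputable def lapEig {n : ℕ} (G : SimpleGraph (Fin n)) : Fin n → ℝ :=
  sortDesc (SimpleGraph.posSemidef_lapMatrix ℝ G).isHermitian.eigenvalues

/-- The number of edges of `G`. -/
noncomputable def numEdges {n : ℕ} (G : SimpleGraph (Fin n)) : ℕ :=
  G.edgeFinset.card

/-- The singular values of the LI-matrix `LI(G) = L(G) - (2m/n)·Iₙ`, in non-increasing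
order; they are the values `|μᵢ - 2m/n|` sorted non-increasingly. -/
noncomputable def LIsv {n : ℕ} (G : SimpleGraph (Fin n)) : Fin n → ℝ :=
  sortDesc (fun i => |lapEig G i - 2 * numEdges G / n|)

/-- The Ky Fan `k`-norm of the LI-matrix of `G`: the sum of the `k` largest singular
values of `LI(G)`. -/
noncomputable def kyFanLI {n : ℕ} (G : SimpleGraph (Fin n)) (k : ℕ) : ℝ :=
  ∑ i ∈ Finset.univ.filter (fun i : Fin n => (i : ℕ) < k), LIsv G i

/-- `S_k(L(G))`, the sum of the `k` largest Laplacian eigenvalues of `G`. -/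
noncomputable def lapSum {n : ℕ} (G : SimpleGraph (Fin n)) (k : ℕ) : ℝ :=
  ∑ i ∈ Finset.univ.filter (fun i : Fin n => (i : ℕ) < k), lapEig G i

open Matrix

lemma sortDesc_antitone {n : ℕ} (f : Fin n → ℝ) : Antitone (sortDesc f) :=
  fun _ _ hij => Tuple.monotone_sort f (Fin.rev_le_rev.mpr hij)

lemma exists_perm_sortDesc_apply {n : ℕ} (f : Fin n → ℝ) :
    ∃ σ : Equiv.Perm (Fin n), ∀ i, sortDesc f (σ i) = f i :=
  ⟨(Fin.revPerm.trans (Tuple.sort f)).symm,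
    fun i => congrArg f ((Fin.revPerm.trans (Tuple.sort f)).apply_symm_apply i)⟩

lemma add_le_sum_sortDesc_filter_lt_two {n : ℕ} (f : Fin n → ℝ) {i j : Fin n} (hij : i ≠ j) :
    f i + f j ≤ ∑ k ∈ univ.filter (fun k : Fin n => (k : ℕ) < 2), sortDesc f k := by
  obtain ⟨σ, hσ⟩ := exists_perm_sortDesc_apply f
  have hn : 2 ≤ n := by have := i.isLt; have := j.isLt; have := Fin.val_ne_of_ne hij; omega
  have htop : univ.filter (fun k : Fin n => (k : ℕ) < 2) = {⟨0, by omega⟩, ⟨1, by omega⟩} := by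
    ext k; simp [Fin.ext_iff]; omega
  rw [htop, sum_pair (by simp [Fin.ext_iff]), ← hσ i, ← hσ j]
  have hσij : σ i ≠ σ j := σ.injective.ne hij
  wlog hlt : σ i < σ j generalizing i j
  · linarith [this hij.symm hσij.symm (lt_of_le_of_ne (not_lt.mp hlt) hσij.symm)]
  have h0 : sortDesc f (σ i) ≤ sortDesc f ⟨0, by omega⟩ :=
    sortDesc_antitone f (Fin.mk_le_mk.mpr (Nat.zero_le _))
  have h1 : sortDesc f (σ j) ≤ sortDesc f ⟨1, by omega⟩ :=
    sortDesc_antitone f (Fin.mk_le_of_le_val (by have := Fin.lt_def.mp hlt; omega))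
  linarith

namespace Matrix.IsHermitian

variable {ι : Type*} [Fintype ι] [DecidableEq ι] {A : Matrix ι ι ℝ}

theorem cfc_apply_eq_sum (hA : A.IsHermitian) (f : ℝ → ℝ) (x y : ι) :
    cfc f A x y =
      ∑ i, f (hA.eigenvalues i) * hA.eigenvectorBasis i x * hA.eigenvectorBasis i y := by
  rw [hA.cfc_eq, IsHermitian.cfc, Unitary.conjStarAlgAut_apply]
  simp [Matrix.mul_apply, diagonal_apply, mul_comm]

theorem sum_eigenvectorBasis_mul (hA : A.IsHermitian) (x y : ι) :
    ∑ i, hA.eigenvectorBasis i x * hA.eigenvectorBasis i y = (1 : Matrix ι ι ℝ) x y := by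
  rw [← cfc_const_one ℝ A hA.isSelfAdjoint, hA.cfc_apply_eq_sum]
  simp only [one_mul]

theorem sum_sq_eigenvalues_sub_mul (hA : A.IsHermitian) (t : ℝ) (x y : ι) :
    ∑ i, (hA.eigenvalues i - t) ^ 2 * hA.eigenvectorBasis i x * hA.eigenvectorBasis i y =
      ((A - t • (1 : Matrix ι ι ℝ)) ^ 2) x y := by
  have hcfc : cfc (fun s => (s - t) ^ 2) A = (A - t • 1) ^ 2 := by
    have := hA.isSelfAdjoint
    rw [cfc_pow (fun s => s - t) 2 A, cfc_sub (fun s => s) (fun _ => t) A, cfc_id' ..,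
      cfc_const .., Algebra.algebraMap_eq_smul_one]
  rw [← hcfc, hA.cfc_apply_eq_sum]

end Matrix.IsHermitian

namespace SimpleGraph

variable {V : Type*} [Fintype V] [DecidableEq V] (G : SimpleGraph V) [DecidableRel G.Adj]

lemma lapMatrix_sub_smul_one (t : ℝ) :
    G.lapMatrix ℝ - t • 1 = diagonal (fun v => (G.degree v : ℝ) - t) - G.adjMatrix ℝ := by
  ext v w
  by_cases h : v = w <;> simp [lapMatrix, degMatrix, h]

lemma sq_lapMatrix_sub_smul_one_apply_self (t : ℝ) (v : V) :
    ((G.lapMatrix ℝ - t • (1 : Matrix V V ℝ)) ^ 2) v v =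
      ((G.degree v : ℝ) - t) ^ 2 + G.degree v := by
  rw [lapMatrix_sub_smul_one, sq, sub_mul, mul_sub, mul_sub]
  simp only [sq, Matrix.sub_apply, diagonal_mul_diagonal, diagonal_apply_eq, diagonal_mul,
    mul_diagonal, adjMatrix_apply, G.irrefl, if_false, mul_zero, zero_mul,
    adjMatrix_mul_self_apply_self]
  ring

lemma sq_lapMatrix_sub_smul_one_apply_of_adj (htf : G.CliqueFree 3) (t : ℝ) {u v : V}
    (huv : G.Adj u v) :
    ((G.lapMatrix ℝ - t • (1 : Matrix V V ℝ)) ^ 2) u v = 2 * t - G.degree u - G.degree v := by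
  have hcommon : (G.adjMatrix ℝ * G.adjMatrix ℝ) u v = 0 := by
    rw [adjMatrix_mul_apply]
    refine sum_eq_zero fun k hk => ?_
    have hku : G.Adj u k := (G.mem_neighborFinset u k).mp hk
    rw [adjMatrix_apply,
      if_neg fun hkv => htf {u, k, v} (is3Clique_triple_iff.mpr ⟨hku, huv, hkv⟩)]
  rw [lapMatrix_sub_smul_one, sq, sub_mul, mul_sub, mul_sub]
  simp only [Matrix.sub_apply, diagonal_mul_diagonal, diagonal_apply_ne _ huv.ne, diagonal_mul,
    mul_diagonal, adjMatrix_apply, if_pos huv, hcommon]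
  ring

end SimpleGraph

section Interlacing

variable {ι : Type*}

lemma exists_eigenvalues_two_by_two (p r s : ℝ) :
    ∃ α β : ℝ, β ≤ α ∧ α + β = p + s ∧ α * β = p * s - r ^ 2 := by
  have hD := Real.sq_sqrt (by positivity : 0 ≤ (p - s) ^ 2 + 4 * r ^ 2)
  exact ⟨(p + s + √((p - s) ^ 2 + 4 * r ^ 2)) / 2, (p + s - √((p - s) ^ 2 + 4 * r ^ 2)) / 2,
    by linarith [Real.sqrt_nonneg ((p - s) ^ 2 + 4 * r ^ 2)], by ring,
    by linear_combination -hD / 4⟩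

lemma exists_quadForm_eq_of_charpoly_eq_zero {p r s α : ℝ} (h : (α - p) * (α - s) = r ^ 2) :
    ∃ c d : ℝ, 0 < c ^ 2 + d ^ 2 ∧
      p * c ^ 2 + 2 * r * c * d + s * d ^ 2 = α * (c ^ 2 + d ^ 2) := by
  by_cases hαp : α = p
  · have hr : r = 0 := by simpa [hαp] using h.symm
    exact ⟨1, 0, by norm_num, by simp [hr, hαp]⟩
  · exact ⟨r, α - p, by have := sq_pos_of_ne_zero (sub_ne_zero.mpr hαp); positivity,
      by linear_combination -(α - p) * h⟩

lemma le_quadForm_of_charpoly_eq_zero {p r s β : ℝ} (hp : β ≤ p) (hs : β ≤ s)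
    (h : (β - p) * (β - s) = r ^ 2) (c d : ℝ) :
    β * (c ^ 2 + d ^ 2) ≤ p * c ^ 2 + 2 * r * c * d + s * d ^ 2 := by
  rcases hp.eq_or_lt with rfl | hp
  · have hr : r = 0 := by simpa using h.symm
    subst hr
    nlinarith [mul_nonneg (sub_nonneg.mpr hs) (sq_nonneg d)]
  · have key : (p - β) * (p * c ^ 2 + 2 * r * c * d + s * d ^ 2 - β * (c ^ 2 + d ^ 2)) =
        ((p - β) * c + r * d) ^ 2 := by linear_combination d ^ 2 * h
    have := (mul_nonneg_iff_of_pos_left (sub_pos.mpr hp)).mp (key ▸ sq_nonneg _)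
    linarith

lemma sum_mul_sq_le_mul_sum_sq {s : Finset ι} {q w : ι → ℝ} {M : ℝ} (h : ∀ i ∈ s, q i ≤ M) :
    ∑ i ∈ s, q i * w i ^ 2 ≤ M * ∑ i ∈ s, w i ^ 2 := by
  rw [mul_sum]
  exact sum_le_sum fun i hi => mul_le_mul_of_nonneg_right (h i hi) (sq_nonneg _)

lemma sum_mul_add_sq [Fintype ι] (q a b : ι → ℝ) (c d : ℝ) :
    ∑ i, q i * (c * a i + d * b i) ^ 2 =
      (∑ i, q i * a i * a i) * c ^ 2 + 2 * (∑ i, q i * a i * b i) * c * d +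
        (∑ i, q i * b i * b i) * d ^ 2 := by
  simp only [sum_mul, mul_sum, ← sum_add_distrib]
  exact sum_congr rfl fun i _ => by ring

/-- Cauchy interlacing for the compression `[[p, r], [r, s]]` of the diagonal form `∑ qᵢ xᵢ²`
to the plane spanned by the orthonormal vectors `a`, `b`; its eigenvalues are `α ≥ β`. -/
theorem exists_ne_le_of_orthonormal_pair [Fintype ι] [DecidableEq ι] (q a b : ι → ℝ)
    (ha : ∑ i, a i * a i = 1) (hb : ∑ i, b i * b i = 1) (hab : ∑ i, a i * b i = 0) {p r s α β : ℝ}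
    (hp : ∑ i, q i * a i * a i = p) (hr : ∑ i, q i * a i * b i = r)
    (hs : ∑ i, q i * b i * b i = s) (hβα : β ≤ α) (hsum : α + β = p + s)
    (hprod : α * β = p * s - r ^ 2) :
    ∃ i j, i ≠ j ∧ α ≤ q i ∧ β ≤ q j := by
  have hQ (c d : ℝ) :
      ∑ i, q i * (c * a i + d * b i) ^ 2 = p * c ^ 2 + 2 * r * c * d + s * d ^ 2 := by
    rw [sum_mul_add_sq, hp, hr, hs]
  have hN (c d : ℝ) : ∑ i, (c * a i + d * b i) ^ 2 = c ^ 2 + d ^ 2 := by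
    simpa [ha, hb, hab] using sum_mul_add_sq (fun _ => 1) a b c d
  have hα : (α - p) * (α - s) = r ^ 2 := by linear_combination α * hsum - hprod
  have hβ : (β - p) * (β - s) = r ^ 2 := by linear_combination β * hsum - hprod
  obtain ⟨k, -, -⟩ := exists_ne_zero_of_sum_ne_zero (ha ▸ one_ne_zero : ∑ i, a i * a i ≠ 0)
  obtain ⟨i₀, -, hi₀⟩ := exists_max_image univ q ⟨k, mem_univ k⟩
  have hαi₀ : α ≤ q i₀ := by
    obtain ⟨c, d, hcd, heig⟩ := exists_quadForm_eq_of_charpoly_eq_zero hα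
    refine le_of_mul_le_mul_right ?_ hcd
    rw [← heig, ← hQ, ← hN]
    exact sum_mul_sq_le_mul_sum_sq fun i hi => hi₀ i hi
  -- Courant–Fischer: test `β` on a vector of the plane that is orthogonal to the coordinate `i₀`.
  obtain ⟨c, d, hcd, hw⟩ : ∃ c d : ℝ, 0 < c ^ 2 + d ^ 2 ∧ c * a i₀ + d * b i₀ = 0 := by
    by_cases h0 : a i₀ = 0
    · exact ⟨1, 0, by norm_num, by simp [h0]⟩
    · exact ⟨-b i₀, a i₀, by have := sq_pos_of_ne_zero h0; positivity, by ring⟩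
  have hNe : 0 < ∑ i ∈ univ.erase i₀, (c * a i + d * b i) ^ 2 := by
    rwa [sum_erase _ (by rw [hw]; ring), hN]
  obtain ⟨j, hj, -⟩ := exists_ne_zero_of_sum_ne_zero hNe.ne'
  obtain ⟨j, hj, hjmax⟩ := exists_max_image (univ.erase i₀) q ⟨j, hj⟩
  refine ⟨i₀, j, (ne_of_mem_erase hj).symm, hαi₀, le_of_mul_le_mul_right ?_ hcd⟩
  calc β * (c ^ 2 + d ^ 2) ≤ p * c ^ 2 + 2 * r * c * d + s * d ^ 2 :=
        le_quadForm_of_charpoly_eq_zero (by nlinarith) (by nlinarith) hβ c d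
    _ = ∑ i ∈ univ.erase i₀, q i * (c * a i + d * b i) ^ 2 := by
        rw [← hQ, sum_erase _ (by rw [hw]; ring)]
    _ ≤ q j * ∑ i ∈ univ.erase i₀, (c * a i + d * b i) ^ 2 := sum_mul_sq_le_mul_sum_sq hjmax
    _ = q j * (c ^ 2 + d ^ 2) := by rw [sum_erase _ (by rw [hw]; ring), hN]

end Interlacing

lemma sqrt_add_add_two_sqrt_mul_le {α β x y : ℝ} (hα : 0 ≤ α) (hx : 0 ≤ x) (hy : 0 ≤ y)
    (hαx : α ≤ x ^ 2) (hβy : β ≤ y ^ 2) : √(α + β + 2 * √(α * β)) ≤ x + y := by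
  rw [Real.sqrt_le_left (by positivity)]
  rcases le_or_gt 0 β with hβ | hβ
  · have : √(α * β) ≤ x * y :=
      Real.sqrt_le_iff.mpr ⟨by positivity, by nlinarith [mul_le_mul hαx hβy hβ (sq_nonneg x)]⟩
    nlinarith
  · rw [Real.sqrt_eq_zero_of_nonpos (mul_nonpos_of_nonneg_of_nonpos hα hβ.le)]
    nlinarith [mul_nonneg hx hy]

lemma abs_sub_add_abs_sub_le_kyFanLI_two {n : ℕ} (G : SimpleGraph (Fin n)) {i j : Fin n}
    (hij : i ≠ j) :
    |(G.posSemidef_lapMatrix ℝ).isHermitian.eigenvalues i - 2 * numEdges G / n| +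
      |(G.posSemidef_lapMatrix ℝ).isHermitian.eigenvalues j - 2 * numEdges G / n| ≤
        kyFanLI G 2 := by
  obtain ⟨σ, hσ⟩ :=
    exists_perm_sortDesc_apply (G.posSemidef_lapMatrix ℝ).isHermitian.eigenvalues
  have := add_le_sum_sortDesc_filter_lt_two (fun k => |lapEig G k - 2 * numEdges G / n|)
    (σ.injective.ne hij)
  simp only [lapEig, hσ] at this
  exact this

theorem stmt_8_general {n : ℕ} (G : SimpleGraph (Fin n)) (htf : G.CliqueFree 3)
    (u v : Fin n) (huv : G.Adj u v) :
    Real.sqrt (((((G.degree u : ℝ) - 2 * (numEdges G : ℝ) / n) ^ 2 +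
          ((G.degree v : ℝ) - 2 * (numEdges G : ℝ) / n) ^ 2 +
          (G.degree u : ℝ) + (G.degree v : ℝ))) +
        2 * Real.sqrt (((((G.degree u : ℝ) - 2 * (numEdges G : ℝ) / n) ^ 2 + (G.degree u : ℝ)) *
            (((G.degree v : ℝ) - 2 * (numEdges G : ℝ) / n) ^ 2 + (G.degree v : ℝ))) -
          ((G.degree u : ℝ) + (G.degree v : ℝ) - 4 * (numEdges G : ℝ) / n) ^ 2)) ≤
      kyFanLI G 2 := by
  set t : ℝ := 2 * (numEdges G : ℝ) / n with ht
  have hL := (G.posSemidef_lapMatrix ℝ).isHermitian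
  obtain ⟨α, β, hβα, hsum, hprod⟩ := exists_eigenvalues_two_by_two
    (((G.degree u : ℝ) - t) ^ 2 + G.degree u) (2 * t - G.degree u - G.degree v)
    (((G.degree v : ℝ) - t) ^ 2 + G.degree v)
  obtain ⟨i, j, hij, hαi, hβj⟩ := exists_ne_le_of_orthonormal_pair
    (fun i => (hL.eigenvalues i - t) ^ 2) (hL.eigenvectorBasis · u) (hL.eigenvectorBasis · v)
    (by simp [hL.sum_eigenvectorBasis_mul]) (by simp [hL.sum_eigenvectorBasis_mul])
    (by simp [hL.sum_eigenvectorBasis_mul, huv.ne])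
    (by rw [hL.sum_sq_eigenvalues_sub_mul, sq_lapMatrix_sub_smul_one_apply_self])
    (by rw [hL.sum_sq_eigenvalues_sub_mul, sq_lapMatrix_sub_smul_one_apply_of_adj G htf t huv])
    (by rw [hL.sum_sq_eigenvalues_sub_mul, sq_lapMatrix_sub_smul_one_apply_self])
    hβα hsum hprod
  have hα : 0 ≤ α := by
    nlinarith [sq_nonneg ((G.degree u : ℝ) - t), sq_nonneg ((G.degree v : ℝ) - t)]
  calc _ = √(α + β + 2 * √(α * β)) := by rw [hsum, hprod, ht]; ring_nf
    _ ≤ |hL.eigenvalues i - t| + |hL.eigenvalues j - t| :=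
        sqrt_add_add_two_sqrt_mul_le hα (abs_nonneg _) (abs_nonneg _) (by rwa [sq_abs])
          (by rwa [sq_abs])
    _ ≤ kyFanLI G 2 := abs_sub_add_abs_sub_le_kyFanLI_two G hij

/-- For any edge `uv` of a triangle-free simple graph `G` with `n` vertices
and `m ≥ 1` edges, `‖LI(G)‖_{F_2} ≥ √(Υ + 2√Ψ)`, where
`Υ = (d_u - 2m/n)² + (d_v - 2m/n)² + d_u + d_v` and
`Ψ = ((d_u - 2m/n)² + d_u)((d_v - 2m/n)² + d_v) - (d_u + d_v - 4m/n)²`. -/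
theorem stmt_8 {n : ℕ} (G : SimpleGraph (Fin n)) (htf : G.CliqueFree 3)
    (hm : 1 ≤ numEdges G) (u v : Fin n) (huv : G.Adj u v) :
    Real.sqrt (((((G.degree u : ℝ) - 2 * (numEdges G : ℝ) / n) ^ 2 +
          ((G.degree v : ℝ) - 2 * (numEdges G : ℝ) / n) ^ 2 +
          (G.degree u : ℝ) + (G.degree v : ℝ))) +
        2 * Real.sqrt (((((G.degree u : ℝ) - 2 * (numEdges G : ℝ) / n) ^ 2 + (G.degree u : ℝ)) *
            (((G.degree v : ℝ) - 2 * (numEdges G : ℝ) / n) ^ 2 + (G.degree v : ℝ))) -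
          ((G.degree u : ℝ) + (G.degree v : ℝ) - 4 * (numEdges G : ℝ) / n) ^ 2)) ≤
      kyFanLI G 2 :=
  stmt_8_general G htf u v huv
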